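/- Let X_t and X_{t'} be jointly distributed finite random vectors with n components each. Assume the doubly-unique information Un^(k)(V_t;V_{t'}|X_t,X_{t'}) satisfies: (non-negativity) it is ≥ 0; (data-processing) Un^(k)(V_t;V_{t'}|X_t,X_{t'}) ≤ Un^(k)(X_t;X_{t'}|X_t,X_{t'}) for every supervenient pair (V_t generated from X_t, V_{t'} generated from X_{t'}, with V_t−X_t−X_{t'}−V_{t'} a Markov chain); and (the paper's Corollary B1) Un^(k)(X_t;X_{t'}|X_t,X_{t'}) = 𝒢^(k)(X_t;X_{t'}). Then the system possesses features that exhibit causal decoupling of order k if and only if 𝒢^(k)(X_t;X_{t'}) > 0. Moreover, assuming additionally the hypotheses of the downward-causation theorem (source data-processing inequality and self-unique identity for Un^(k), and Σ_{|α|=k} Syn^(k)(X_t;X_{t'}^α) ≥ 𝒟^(k)(X_t;X_{t'}) ≥ Syn^(k)(X_t;X_{t'}^β) for all |β| = k), if 𝒢^(k)(X_t;X_{t'}) > 0 and 𝒟^(k)(X_t;X_{t'}) = 0 then the system is perfectly decoupled. -/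

import Mathlib

/-!
Framework: finite probability.  A finite sample space `Ω` carries a probability
mass function `μ : Ω → ℝ`; random variables are functions on `Ω`.
-/

noncomputable section

open scoped BigOperators

attribute [local instance] Classical.propDecidable

variable {Ω : Type} [Fintype Ω]

/-- The probability that the random variable `f` takes the value `a`, under the pmf `μ`. -/
def prEq (μ : Ω → ℝ) {A : Type} (f : Ω → A) (a : A) : ℝ :=
  ∑ ω, if f ω = a then μ ω else 0

/-- `μ` is a probability mass function on the finite sample space `Ω`. -/
def IsPMF (μ : Ω → ℝ) : Prop :=
  (∀ ω, 0 ≤ μ ω) ∧ ∑ ω, μ ω = 1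

/-- The Markov chain `f − g − h`: `f` and `h` are conditionally independent given `g`. -/
def MarkovChain (μ : Ω → ℝ) {A B C : Type} (f : Ω → A) (g : Ω → B) (h : Ω → C) : Prop :=
  ∀ a b c,
    prEq μ (fun ω => (f ω, g ω, h ω)) (a, b, c) * prEq μ g b =
      prEq μ (fun ω => (f ω, g ω)) (a, b) * prEq μ (fun ω => (g ω, h ω)) (b, c)

/-- Statistical independence of two random variables. -/
def IndepRV (μ : Ω → ℝ) {A B : Type} (f : Ω → A) (g : Ω → B) : Prop :=
  ∀ a b, prEq μ (fun ω => (f ω, g ω)) (a, b) = prEq μ f a * prEq μ g b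

/-- Shannon mutual information `I(f;g)`. -/
def mutInfo (μ : Ω → ℝ) {A B : Type} (f : Ω → A) (g : Ω → B) : ℝ :=
  ∑ a ∈ Finset.univ.image f, ∑ b ∈ Finset.univ.image g,
    prEq μ (fun ω => (f ω, g ω)) (a, b) *
      Real.log (prEq μ (fun ω => (f ω, g ω)) (a, b) / (prEq μ f a * prEq μ g b))

/-- Conditional mutual information `I(f;g|h)`. -/
def condMutInfo (μ : Ω → ℝ) {A B C : Type} (f : Ω → A) (g : Ω → B) (h : Ω → C) : ℝ :=
  ∑ a ∈ Finset.univ.image f, ∑ b ∈ Finset.univ.image g, ∑ c ∈ Finset.univ.image h,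
    prEq μ (fun ω => (f ω, g ω, h ω)) (a, b, c) *
      Real.log ((prEq μ h c * prEq μ (fun ω => (f ω, g ω, h ω)) (a, b, c)) /
        (prEq μ (fun ω => (f ω, h ω)) (a, c) * prEq μ (fun ω => (g ω, h ω)) (b, c)))

/-- Conditional entropy `H(f|g)`. -/
def condEntropyRV (μ : Ω → ℝ) {A B : Type} (f : Ω → A) (g : Ω → B) : ℝ :=
  -∑ a ∈ Finset.univ.image f, ∑ b ∈ Finset.univ.image g,
    prEq μ (fun ω => (f ω, g ω)) (a, b) *
      Real.log (prEq μ (fun ω => (f ω, g ω)) (a, b) / prEq μ g b)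

/-- The sub-vector `X^α` of the random vector `X`, for a set of indices `α ⊆ [n]`. -/
def subvec {n : ℕ} {𝓧 : Fin n → Type} (X : Ω → ∀ i, 𝓧 i) (α : Finset (Fin n)) :
    Ω → ∀ i : α, 𝓧 i :=
  fun ω i => X ω i

/-- The collection of all subsets of `[n]` of cardinality `k`. -/
def kSets (n k : ℕ) : Finset (Finset (Fin n)) :=
  Finset.univ.filter fun α => α.card = k

/-- The Markov chain `f − g − h − i` of four variables:
`f ⟂ (h,i) | g` and `(f,g) ⟂ i | h`. -/
def FourChain {Ω : Type} [Fintype Ω] (μ : Ω → ℝ) {A B C D : Type}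
    (f : Ω → A) (g : Ω → B) (h : Ω → C) (i : Ω → D) : Prop :=
  MarkovChain μ f g (fun ω => (h ω, i ω)) ∧
    MarkovChain μ (fun ω => (f ω, g ω)) h i

/-
Part (i): by data processing every supervenient pair carries at most `Un2` of the pair
`(X_t, X_{t'})` itself, which equals `𝒢`, and that pair is a supervenient pair of its own.
Part (ii): for a supervenient `f`, `f − X_t − (X_t, X_{t'}^α)` is again a Markov chain, so
`Un(f ; X_{t'}^α | X_t) ≤ Un(X_t ; X_{t'}^α | X_t) = Syn(X_t ; X_{t'}^α) ≤ 𝒟 = 0`.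
-/

section MarkovChain

variable (μ : Ω → ℝ) {A B C D : Type}

theorem prEq_congr {F : Ω → A} {G : Ω → B} {a : A} {b : B}
    (h : ∀ ω, F ω = a ↔ G ω = b) : prEq μ F a = prEq μ G b :=
  Finset.sum_congr rfl fun ω _ => if_congr (h ω) rfl rfl

theorem prEq_eq_zero {F : Ω → A} {a : A} (h : ∀ ω, F ω ≠ a) : prEq μ F a = 0 :=
  Finset.sum_eq_zero fun ω _ => if_neg (h ω)

theorem prEq_triple_map_eq_sum (F : Ω → A) (G : Ω → B) (h : Ω → C) (φ : B → C → D)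
    (a : A) (b : B) (d : D) :
    prEq μ (fun ω => (F ω, G ω, φ (G ω) (h ω))) (a, b, d) =
      ∑ c ∈ (Finset.univ.image h).filter (fun c => φ b c = d),
        prEq μ (fun ω => (F ω, G ω, h ω)) (a, b, c) := by
  unfold prEq
  rw [Finset.sum_comm]
  refine Finset.sum_congr rfl fun ω _ => ?_
  by_cases hFG : F ω = a ∧ G ω = b
  · obtain ⟨rfl, rfl⟩ := hFG
    simp
  · simp only [Prod.mk.injEq]
    rw [if_neg (by tauto), Finset.sum_eq_zero fun c _ => if_neg (by tauto)]

variable {μ} {f : Ω → A} {g : Ω → B} {h : Ω → C}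

theorem MarkovChain.of_left_eq_comp (φ : B → A) :
    MarkovChain μ (fun ω => φ (g ω)) g h := by
  intro a b c
  by_cases hab : a = φ b
  · subst hab
    rw [prEq_congr μ (F := fun ω => (φ (g ω), g ω, h ω)) (G := fun ω => (g ω, h ω))
        (b := (b, c)) fun ω => by aesop,
      prEq_congr μ (F := fun ω => (φ (g ω), g ω)) (G := g) (b := b) fun ω => by aesop]
    ring
  · rw [prEq_eq_zero μ (F := fun ω => (φ (g ω), g ω, h ω)) (a := (a, b, c)) fun ω he => by
        simp only [Prod.mk.injEq] at he; exact hab (he.2.1 ▸ he.1.symm),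
      prEq_eq_zero μ (F := fun ω => (φ (g ω), g ω)) (a := (a, b)) fun ω he => by
        simp only [Prod.mk.injEq] at he; exact hab (he.2 ▸ he.1.symm)]
    ring

theorem MarkovChain.symm (hm : MarkovChain μ f g h) : MarkovChain μ h g f := by
  intro c b a
  rw [prEq_congr μ (F := fun ω => (h ω, g ω, f ω)) (G := fun ω => (f ω, g ω, h ω))
      (b := (a, b, c)) fun ω => by simp only [Prod.mk.injEq]; tauto,
    prEq_congr μ (F := fun ω => (h ω, g ω)) (G := fun ω => (g ω, h ω)) (b := (b, c)) fun ω => by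
      simp only [Prod.mk.injEq]; tauto,
    prEq_congr μ (F := fun ω => (g ω, f ω)) (G := fun ω => (f ω, g ω)) (b := (a, b)) fun ω => by
      simp only [Prod.mk.injEq]; tauto,
    hm a b c]
  ring

/-- Given `g = b`, the variable `φ (g, h)` is a function of `h` alone. -/
theorem MarkovChain.map_right (hm : MarkovChain μ f g h) (φ : B → C → D) :
    MarkovChain μ f g (fun ω => φ (g ω) (h ω)) := by
  intro a b d
  have hpair : prEq μ (fun ω => (g ω, φ (g ω) (h ω))) (b, d) =
      ∑ c ∈ (Finset.univ.image h).filter (fun c => φ b c = d),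
        prEq μ (fun ω => (g ω, h ω)) (b, c) := by
    rw [prEq_congr μ (G := fun ω => ((), g ω, φ (g ω) (h ω))) (b := ((), b, d)) fun ω => by simp,
      prEq_triple_map_eq_sum]
    exact Finset.sum_congr rfl fun c _ => prEq_congr μ fun ω => by simp
  rw [prEq_triple_map_eq_sum, hpair, Finset.sum_mul, Finset.mul_sum]
  exact Finset.sum_congr rfl fun c _ => hm a b c

end MarkovChain

/- `Un2 V f U g` stands for `Un⁽ᵏ⁾(f ; g | X_t, X_{t'})`, `Un V f T t` for `Un⁽ᵏ⁾(f ; t | X_t)`,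
`Syn T t` for `Syn⁽ᵏ⁾(X_t ; t)`, and `G`, `D` for `𝒢⁽ᵏ⁾(X_t;X_{t'})`, `𝒟⁽ᵏ⁾(X_t;X_{t'})`. -/
theorem causal_decoupling_iff_G_pos_and_perfect_decoupling_general
    {Ω : Type} [Fintype Ω] (μ : Ω → ℝ)
    {n : ℕ} {𝓧 𝓨 : Fin n → Type} [∀ i, Fintype (𝓧 i)] [∀ i, Fintype (𝓨 i)]
    (X : Ω → ∀ i, 𝓧 i) (X' : Ω → ∀ i, 𝓨 i)
    (k : ℕ)
    (Un2 : (V : Type) → (Ω → V) → (U : Type) → (Ω → U) → ℝ)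
    (Un : (V : Type) → (Ω → V) → (T : Type) → (Ω → T) → ℝ)
    (Syn : (T : Type) → (Ω → T) → ℝ)
    (G D : ℝ)
    (hUn2_dpi : ∀ (V U : Type) (f : Ω → V) (g : Ω → U),
      FourChain μ f X X' g → Un2 V f U g ≤ Un2 (∀ i, 𝓧 i) X (∀ i, 𝓨 i) X')
    (hcorB1 : Un2 (∀ i, 𝓧 i) X (∀ i, 𝓨 i) X' = G)
    (hUn_nonneg : ∀ (V : Type) (f : Ω → V) (T : Type) (t : Ω → T), 0 ≤ Un V f T t)
    (hUn_dpi : ∀ (W Z T : Type) (f : Ω → W) (g : Ω → Z) (t : Ω → T),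
      MarkovChain μ f g (fun ω => (X ω, t ω)) → Un W f T t ≤ Un Z g T t)
    (hself : ∀ (T : Type) (t : Ω → T), Un (∀ i, 𝓧 i) X T t = Syn T t)
    (hD_lb : ∀ β ∈ kSets n k, Syn (∀ i : β, 𝓨 i) (subvec X' β) ≤ D) :
    ((∃ (V U : Type) (_ : Fintype V) (_ : Fintype U) (f : Ω → V) (g : Ω → U),
        FourChain μ f X X' g ∧ 0 < Un2 V f U g) ↔ 0 < G) ∧
    (0 < G → D = 0 →
      ∀ (V : Type) (_ : Fintype V) (f : Ω → V),
        MarkovChain μ f X X' → 0 < Un V f (∀ i, 𝓨 i) X' →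
          (0 < Un V f (∀ i, 𝓨 i) X' ∧
            ∀ α ∈ kSets n k, Un V f (∀ i : α, 𝓨 i) (subvec X' α) = 0)) := by
  refine ⟨⟨?_, fun hG => ?_⟩, fun _ hD V _ f hm hpos => ⟨hpos, fun α hα => ?_⟩⟩
  · rintro ⟨V, U, _, _, f, g, hchain, hpos⟩
    linarith [hcorB1 ▸ hUn2_dpi V U f g hchain]
  · have hchain : FourChain μ X X X' X' :=
      ⟨MarkovChain.of_left_eq_comp id, (MarkovChain.of_left_eq_comp id).symm⟩
    exact ⟨_, _, inferInstance, inferInstance, X, X', hchain, hcorB1 ▸ hG⟩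
  · have hchain : MarkovChain μ f X (fun ω => (X ω, subvec X' α ω)) :=
      hm.map_right fun x x' => (x, fun i : α => x' i)
    have hdpi := hself _ _ ▸ hUn_dpi _ _ _ f X (subvec X' α) hchain
    linarith [hD_lb α hα, hUn_nonneg V f _ (subvec X' α)]

theorem causal_decoupling_iff_G_pos_and_perfect_decoupling
    {Ω : Type} [Fintype Ω] (μ : Ω → ℝ) (hμ : IsPMF μ)
    {n : ℕ} {𝓧 𝓨 : Fin n → Type} [∀ i, Fintype (𝓧 i)] [∀ i, Fintype (𝓨 i)]
    (X : Ω → ∀ i, 𝓧 i) (X' : Ω → ∀ i, 𝓨 i)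
    (k : ℕ)
    (Un2 : (V : Type) → (Ω → V) → (U : Type) → (Ω → U) → ℝ)
    (Un : (V : Type) → (Ω → V) → (T : Type) → (Ω → T) → ℝ)
    (Syn : (T : Type) → (Ω → T) → ℝ)
    (G D : ℝ)
    (hUn2_nonneg : ∀ (V : Type) (f : Ω → V) (U : Type) (g : Ω → U), 0 ≤ Un2 V f U g)
    (hUn2_dpi : ∀ (V U : Type) (f : Ω → V) (g : Ω → U),
      FourChain μ f X X' g → Un2 V f U g ≤ Un2 (∀ i, 𝓧 i) X (∀ i, 𝓨 i) X')
    (hcorB1 : Un2 (∀ i, 𝓧 i) X (∀ i, 𝓨 i) X' = G)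
    (hUn_nonneg : ∀ (V : Type) (f : Ω → V) (T : Type) (t : Ω → T), 0 ≤ Un V f T t)
    (hUn_dpi : ∀ (W Z T : Type) (f : Ω → W) (g : Ω → Z) (t : Ω → T),
      MarkovChain μ f g (fun ω => (X ω, t ω)) → Un W f T t ≤ Un Z g T t)
    (hself : ∀ (T : Type) (t : Ω → T), Un (∀ i, 𝓧 i) X T t = Syn T t)
    (hD_ub : D ≤ ∑ α ∈ kSets n k, Syn (∀ i : α, 𝓨 i) (subvec X' α))
    (hD_lb : ∀ β ∈ kSets n k, Syn (∀ i : β, 𝓨 i) (subvec X' β) ≤ D) :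
    ((∃ (V U : Type) (_ : Fintype V) (_ : Fintype U) (f : Ω → V) (g : Ω → U),
        FourChain μ f X X' g ∧ 0 < Un2 V f U g) ↔ 0 < G) ∧
    (0 < G → D = 0 →
      ∀ (V : Type) (_ : Fintype V) (f : Ω → V),
        MarkovChain μ f X X' → 0 < Un V f (∀ i, 𝓨 i) X' →
          (0 < Un V f (∀ i, 𝓨 i) X' ∧
            ∀ α ∈ kSets n k, Un V f (∀ i : α, 𝓨 i) (subvec X' α) = 0)) :=
  causal_decoupling_iff_G_pos_and_perfect_decoupling_general μ X X' k Un2 Un Syn G D hUn2_dpi hcorB1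
    hUn_nonneg hUn_dpi hself hD_lb
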